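/- Let {(Xₙ, Aₙ, φₙ^X, φₙ^A)} be a directed sequence of right Hilbert C*-modules with direct limit (X∞, A∞, {λₙ^X}, {λₙ^A}). Then X∞ carries a unique structure of right Hilbert C*-module over A∞ such that λₙ^X(xₙ)·λₙ^A(aₙ) = λₙ^X(xₙaₙ) and ⟨λₙ^X(x), λₙ^X(y)⟩ = λₙ^A(⟨x,y⟩) for all n, and the resulting Hilbert-module norm on X∞ agrees with the direct-limit norm ‖λₙ^X(x)‖ = limₘ ‖φ^X_{n,m}(x)‖. -/

import Mathlib

noncomputable section

universe u

/-- A (bundled) right Hilbert C*-module structure on `X` over the C*-algebra `A`,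
whose induced norm agrees with the given norm on `X`. -/
structure RHM (A : Type u) (X : Type u) [NonUnitalCStarAlgebra A]
    [NormedAddCommGroup X] [NormedSpace ℂ X] where
  smul : X → A → X
  inner : X → X → A
  smul_add : ∀ x a b, smul x (a + b) = smul x a + smul x b
  add_smul : ∀ x y a, smul (x + y) a = smul x a + smul y a
  smul_mul : ∀ x a b, smul (smul x a) b = smul x (a * b)
  smul_complex : ∀ (c : ℂ) x a, smul (c • x) a = c • smul x a
  smul_complex' : ∀ (c : ℂ) x a, smul x (c • a) = c • smul x a
  inner_add_right : ∀ x y z, inner x (y + z) = inner x y + inner x z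
  inner_smul_right : ∀ x y a, inner x (smul y a) = inner x y * a
  inner_smul_complex : ∀ (c : ℂ) x y, inner x (c • y) = c • inner x y
  star_inner : ∀ x y, star (inner x y) = inner y x
  inner_self_nonneg : ∀ x, ∃ b, inner x x = star b * b
  inner_self_eq_zero : ∀ x, inner x x = 0 → x = 0
  norm_eq : ∀ x, ‖x‖ = Real.sqrt ‖inner x x‖

/-- Any C*-algebra as a right Hilbert C*-module over itself. -/
def selfRHM (A : Type u) [NonUnitalCStarAlgebra A] : RHM A A where
  smul x a := x * a
  inner x y := star x * y
  smul_add := fun x a b => mul_add x a b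
  add_smul := fun x y a => add_mul x y a
  smul_mul := fun x a b => mul_assoc x a b
  smul_complex := fun c x a => smul_mul_assoc c x a
  smul_complex' := fun c x a => mul_smul_comm c x a
  inner_add_right := fun x y z => mul_add _ _ _
  inner_smul_right := fun x y a => (mul_assoc _ _ _).symm
  inner_smul_complex := fun c x y => mul_smul_comm c _ _
  star_inner := fun x y => by rw [star_mul, star_star]
  inner_self_nonneg := fun x => ⟨x, rfl⟩
  inner_self_eq_zero := fun x h => (CStarRing.star_mul_self_eq_zero_iff x).mp h
  norm_eq := fun x => by
    rw [CStarRing.norm_star_mul_self, Real.sqrt_mul_self (norm_nonneg x)]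

variable {A B A' B' : Type u} {X Y Z W : Type u}

section Defs
variable [NonUnitalCStarAlgebra A] [NonUnitalCStarAlgebra B]
  [NormedAddCommGroup X] [NormedSpace ℂ X] [NormedAddCommGroup Y] [NormedSpace ℂ Y]
  [NormedAddCommGroup Z] [NormedSpace ℂ Z]

/-- `(φ, σ)` is a homomorphism of right Hilbert C*-modules. -/
def IsModHom (hX : RHM A X) (hY : RHM B Y) (σ : A →⋆ₙₐ[ℂ] B) (φ : X →ₗ[ℂ] Y) : Prop :=
  (∀ x a, φ (hX.smul x a) = hY.smul (φ x) (σ a)) ∧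
    ∀ x y, hY.inner (φ x) (φ y) = σ (hX.inner x y)

/-- `T` is the rank-one operator `θ_{x,y} : z ↦ x⟨y,z⟩`. -/
def IsRankOne (hX : RHM A X) (x y : X) (T : X →L[ℂ] X) : Prop :=
  ∀ z, T z = hX.smul x (hX.inner y z)

/-- The compact operators `K(X)`: the closed linear span of the rank-one operators. -/
def Compacts (hX : RHM A X) : Set (X →L[ℂ] X) :=
  closure (Submodule.span ℂ {T : X →L[ℂ] X | ∃ x y, IsRankOne hX x y T} : Set (X →L[ℂ] X))

/-- `S` is an adjoint of `T`. -/
def IsAdj (hX : RHM A X) (T S : X →L[ℂ] X) : Prop :=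
  ∀ x y, hX.inner (T x) y = hX.inner x (S y)

/-- `φl : A → L(X)` is a left action of `A` on the right Hilbert `B`-module `X`,
making `X` an `A`–`B` correspondence. -/
structure IsLeftAction (hX : RHM B X) (φl : A → X →L[ℂ] X) : Prop where
  map_add : ∀ a b, φl (a + b) = φl a + φl b
  map_mul : ∀ a b, φl (a * b) = (φl a).comp (φl b)
  map_smulc : ∀ (c : ℂ) a, φl (c • a) = c • φl a
  map_star : ∀ a x y, hX.inner (φl a x) y = hX.inner x (φl (star a) y)

/-- Data exhibiting `Z` as the interior tensor product `X ⊗_φ Y` of the right Hilbert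
`A`-module `X` with the `A`–`B` correspondence `(Y, φ)`. -/
structure TensorData (hX : RHM A X) (hY : RHM B Y) (φ : A → Y →L[ℂ] Y) (hZ : RHM B Z) where
  tmul : X → Y → Z
  tmul_add_left : ∀ x x' y, tmul (x + x') y = tmul x y + tmul x' y
  tmul_add_right : ∀ x y y', tmul x (y + y') = tmul x y + tmul x y'
  tmul_smulc : ∀ (c : ℂ) x y, tmul (c • x) y = c • tmul x y
  balanced : ∀ x a y, tmul (hX.smul x a) y = tmul x (φ a y)
  smul_tmul : ∀ x y b, hZ.smul (tmul x y) b = tmul x (hY.smul y b)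
  inner_tmul : ∀ x x' y y',
    hZ.inner (tmul x y) (tmul x' y') = hY.inner y (φ (hX.inner x x') y')
  dense : closure (Submodule.span ℂ {z : Z | ∃ x y, z = tmul x y} : Set Z) = Set.univ

/-- `S = T ⊗ id` with respect to the tensor product data `td`. -/
def IsAmpl {hX : RHM A X} {hY : RHM B Y} {φ : A → Y →L[ℂ] Y} {hZ : RHM B Z}
    (td : TensorData hX hY φ hZ) (T : X →L[ℂ] X) (S : Z →L[ℂ] Z) : Prop :=
  ∀ x y, S (td.tmul x y) = td.tmul (T x) y

end Defs

section XA
variable [NonUnitalCStarAlgebra A] [NormedAddCommGroup X] [NormedSpace ℂ X]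

/-- Data exhibiting the C*-algebra `A'` as `X(A) = K(X) + Im φ_X ⊆ L(X)`, for a
correspondence `(X, φX)` over `A`. -/
structure XAData (hX : RHM A X) (φX : A → X →L[ℂ] X) (A' : Type u)
    [NonUnitalCStarAlgebra A'] where
  ι : A' → X →L[ℂ] X
  ι_inj : Function.Injective ι
  ι_add : ∀ r s, ι (r + s) = ι r + ι s
  ι_mul : ∀ r s, ι (r * s) = (ι r).comp (ι s)
  ι_smulc : ∀ (c : ℂ) r, ι (c • r) = c • ι r
  ι_star : ∀ r x y, hX.inner (ι r x) y = hX.inner x (ι (star r) y)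
  ι_norm : ∀ r, ‖ι r‖ = ‖r‖
  ι_range : Set.range ι = {T | ∃ K ∈ Compacts hX, ∃ a : A, T = K + φX a}

end XA

section CP
variable [NonUnitalCStarAlgebra A] [NormedAddCommGroup X] [NormedSpace ℂ X]

/-- A Toeplitz representation of the correspondence `(X, φX)` over `A` in `O`. -/
structure IsToeplitzRep {O : Type u} [NonUnitalCStarAlgebra O]
    (hX : RHM A X) (φX : A → X →L[ℂ] X) (π : A →⋆ₙₐ[ℂ] O) (t : X →ₗ[ℂ] O) : Prop where
  map_rsmul : ∀ x a, t (hX.smul x a) = t x * π a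
  map_lsmul : ∀ a x, t (φX a x) = π a * t x
  map_inner : ∀ x y, star (t x) * t y = π (hX.inner x y)

/-- A covariant (coisometric on `φX⁻¹(K(X))`) representation of `(X, φX)`. -/
def IsCovariantRep {O : Type u} [NonUnitalCStarAlgebra O]
    (hX : RHM A X) (φX : A → X →L[ℂ] X) (π : A →⋆ₙₐ[ℂ] O) (t : X →ₗ[ℂ] O) : Prop :=
  IsToeplitzRep hX φX π t ∧
    ∃ Ψ : (X →L[ℂ] X) → O,
      (∀ (T : X →L[ℂ] X) (n : ℕ) (xs ys : Fin n → X),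
        (∀ z, T z = ∑ i, hX.smul (xs i) (hX.inner (ys i) z)) →
          Ψ T = ∑ i, t (xs i) * star (t (ys i))) ∧
      ContinuousOn Ψ (Compacts hX) ∧
      ∀ a, φX a ∈ Compacts hX → π a = Ψ (φX a)

/-- `(O, SA, SX)` is the augmented Cuntz–Pimsner algebra of the correspondence
`(X, φX)`: a covariant representation generating `O` which is universal among
covariant representations. -/
structure IsAugCP (hX : RHM A X) (φX : A → X →L[ℂ] X) (O : Type u)
    [NonUnitalCStarAlgebra O] (SA : A →⋆ₙₐ[ℂ] O) (SX : X →ₗ[ℂ] O) : Type (u + 1) where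
  cov : IsCovariantRep hX φX SA SX
  generates :
    closure ((NonUnitalStarAlgebra.adjoin ℂ (Set.range SA ∪ Set.range SX) :
      NonUnitalStarSubalgebra ℂ O) : Set O) = Set.univ
  universal : ∀ (C : Type u) [NonUnitalCStarAlgebra C] (π : A →⋆ₙₐ[ℂ] C) (t : X →ₗ[ℂ] C),
    IsCovariantRep hX φX π t →
      ∃ Φ : O →⋆ₙₐ[ℂ] C, (∀ a, Φ (SA a) = π a) ∧ ∀ x, Φ (SX x) = t x

end CP

section Bimodule
variable [NonUnitalCStarAlgebra A] [NonUnitalCStarAlgebra B]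
  [NormedAddCommGroupX : NormedAddCommGroup X] [NormedSpace ℂ X]

/-- A Hilbert C*-bimodule structure: `X` is a left Hilbert `A`-module and a right
Hilbert `B`-module with compatible inner products. -/
structure HBimod (A B : Type u) (X : Type u) [NonUnitalCStarAlgebra A]
    [NonUnitalCStarAlgebra B] [NormedAddCommGroup X] [NormedSpace ℂ X] where
  right : RHM B X
  lsmul : A → X → X
  linner : X → X → A
  lsmul_add : ∀ a x y, lsmul a (x + y) = lsmul a x + lsmul a y
  add_lsmul : ∀ a b x, lsmul (a + b) x = lsmul a x + lsmul b x
  lsmul_mul : ∀ a b x, lsmul (a * b) x = lsmul a (lsmul b x)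
  lsmul_complex : ∀ (c : ℂ) a x, lsmul a (c • x) = c • lsmul a x
  linner_add_left : ∀ x y z, linner (x + y) z = linner x z + linner y z
  linner_lsmul_left : ∀ a x y, linner (lsmul a x) y = a * linner x y
  star_linner : ∀ x y, star (linner x y) = linner y x
  linner_self_nonneg : ∀ x, ∃ b, linner x x = b * star b
  compat : ∀ x y z, lsmul (linner x y) z = right.smul x (right.inner y z)
  assoc : ∀ a x b, right.smul (lsmul a x) b = lsmul a (right.smul x b)
  lnorm_eq : ∀ x, ‖x‖ = Real.sqrt ‖linner x x‖

/-- The bimodule is full on the left. -/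
def LeftFull (b : HBimod A B X) : Prop :=
  closure (Submodule.span ℂ {a : A | ∃ x y, a = b.linner x y} : Set A) = Set.univ

/-- The bimodule is full on the right. -/
def RightFull (b : HBimod A B X) : Prop :=
  closure (Submodule.span ℂ {c : B | ∃ x y, c = b.right.inner x y} : Set B) = Set.univ

end Bimodule

section Crossed
variable [NonUnitalCStarAlgebra A] [NormedAddCommGroup X] [NormedSpace ℂ X]

/-- A covariant pair for the Hilbert C*-bimodule `X` over `A`. -/
def IsCovPair {C : Type u} [NonUnitalCStarAlgebra C] (b : HBimod A A X)
    (iA : A →⋆ₙₐ[ℂ] C) (iX : X →ₗ[ℂ] C) : Prop :=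
  (∀ x a, iX (b.right.smul x a) = iX x * iA a) ∧
  (∀ a x, iX (b.lsmul a x) = iA a * iX x) ∧
  (∀ x y, star (iX x) * iX y = iA (b.right.inner x y)) ∧
  (∀ x y, iX x * star (iX y) = iA (b.linner x y))

/-- `(C, iA, iX)` is the crossed product `A ⋊ X` by the Hilbert C*-bimodule `X`:
a covariant pair generating `C` which is universal among covariant pairs. -/
structure IsCrossedProduct (b : HBimod A A X) (C : Type u) [NonUnitalCStarAlgebra C]
    (iA : A →⋆ₙₐ[ℂ] C) (iX : X →ₗ[ℂ] C) : Type (u + 1) where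
  covariant : IsCovPair b iA iX
  generates :
    closure ((NonUnitalStarAlgebra.adjoin ℂ (Set.range iA ∪ Set.range iX) :
      NonUnitalStarSubalgebra ℂ C) : Set C) = Set.univ
  universal : ∀ (D : Type u) [NonUnitalCStarAlgebra D] (jA : A →⋆ₙₐ[ℂ] D) (jX : X →ₗ[ℂ] D),
    IsCovPair b jA jX →
      ∃ Φ : C →⋆ₙₐ[ℂ] D, (∀ a, Φ (iA a) = jA a) ∧ ∀ x, Φ (iX x) = jX x

end Crossed

/-- An imprimitivity (Morita equivalence) bimodule between the C*-algebras `P` and `Q`. -/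
structure Imprim (P Q : Type u) [NonUnitalCStarAlgebra P] [NonUnitalCStarAlgebra Q] :
    Type (u + 1) where
  Z : Type u
  instN : NormedAddCommGroup Z
  instS : @NormedSpace ℂ Z _ instN.toSeminormedAddCommGroup
  bim : @HBimod P Q Z _ _ instN instS
  full_left : @LeftFull P Q Z _ _ instN instS bim
  full_right : @RightFull P Q Z _ _ instN instS bim


section AuxLemmas

namespace RHM
variable {A₀ X₀ : Type u} [NonUnitalCStarAlgebra A₀] [NormedAddCommGroup X₀] [NormedSpace ℂ X₀]
  (h : RHM A₀ X₀)

lemma inner_add_left (x y z : X₀) : h.inner (x + y) z = h.inner x z + h.inner y z := by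
  rw [← h.star_inner, h.inner_add_right, star_add, h.star_inner, h.star_inner]

lemma inner_smulc_left (c : ℂ) (x y : X₀) :
    h.inner (c • x) y = (star c) • h.inner x y := by
  rw [← h.star_inner, h.inner_smul_complex, star_smul, h.star_inner]

lemma inner_smul_left (x y : X₀) (a : A₀) :
    h.inner (h.smul x a) y = star a * h.inner x y := by
  rw [← h.star_inner, h.inner_smul_right, star_mul, h.star_inner]

lemma inner_zero_right (x : X₀) : h.inner x 0 = 0 := by
  have := h.inner_add_right x 0 0
  rw [add_zero] at this
  exact add_eq_left.mp this.symm

lemma inner_zero_left (x : X₀) : h.inner 0 x = 0 := by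
  rw [← h.star_inner, h.inner_zero_right, star_zero]

lemma inner_neg_right (x y : X₀) : h.inner x (-y) = -h.inner x y := by
  have : (-y : X₀) = (-1 : ℂ) • y := by simp
  rw [this, h.inner_smul_complex]; simp

lemma inner_neg_left (x y : X₀) : h.inner (-x) y = -h.inner x y := by
  rw [← h.star_inner, h.inner_neg_right, star_neg, h.star_inner]

lemma inner_sub_right (x y z : X₀) : h.inner x (y - z) = h.inner x y - h.inner x z := by
  rw [sub_eq_add_neg, h.inner_add_right, h.inner_neg_right, sub_eq_add_neg]

lemma inner_sub_left (x y z : X₀) : h.inner (x - y) z = h.inner x z - h.inner y z := by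
  rw [sub_eq_add_neg, h.inner_add_left, h.inner_neg_left, sub_eq_add_neg]

lemma norm_inner_self (x : X₀) : ‖h.inner x x‖ = ‖x‖ ^ 2 := by
  rw [h.norm_eq x, Real.sq_sqrt (norm_nonneg _)]

lemma norm_smul_le (x : X₀) (a : A₀) : ‖h.smul x a‖ ≤ ‖x‖ * ‖a‖ := by
  have h1 : h.inner (h.smul x a) (h.smul x a) = star a * (h.inner x x * a) := by
    rw [h.inner_smul_left, h.inner_smul_right]
  have h2 : ‖h.smul x a‖ ^ 2 ≤ (‖x‖ * ‖a‖) ^ 2 := by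
    rw [← h.norm_inner_self, h1]
    calc ‖star a * (h.inner x x * a)‖ ≤ ‖star a‖ * ‖h.inner x x * a‖ := norm_mul_le _ _
      _ ≤ ‖star a‖ * (‖h.inner x x‖ * ‖a‖) := by
          have h3 : ‖h.inner x x * a‖ ≤ ‖h.inner x x‖ * ‖a‖ := norm_mul_le _ _
          have h4 : (0:ℝ) ≤ ‖star a‖ := norm_nonneg _
          exact mul_le_mul_of_nonneg_left h3 h4
      _ = ‖a‖ * (‖x‖ ^ 2 * ‖a‖) := by rw [norm_star, h.norm_inner_self]
      _ = (‖x‖ * ‖a‖) ^ 2 := by ring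
  exact (pow_le_pow_iff_left₀ (norm_nonneg _) (by positivity) two_ne_zero).mp h2

lemma inner_self_expand (c d : ℂ) (hdc : d * c = 1) (hstar : star c = d) (x y : X₀) :
    h.inner (x + c • y) (x + c • y) =
      h.inner x x + c • h.inner x y + d • h.inner y x + h.inner y y := by
  simp only [h.inner_add_right, h.inner_add_left, h.inner_smul_complex, h.inner_smulc_left,
    hstar, smul_smul, hdc, show c * d = 1 from by rw [mul_comm]; exact hdc, one_smul]
  abel

/-- Polarization identity. -/
lemma polarization (x y : X₀) :
    (4 : ℂ) • h.inner x y =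
      h.inner (x + y) (x + y) - h.inner (x - y) (x - y)
        - Complex.I • h.inner (x + Complex.I • y) (x + Complex.I • y)
        + Complex.I • h.inner (x - Complex.I • y) (x - Complex.I • y) := by
  have hs1 : x - y = x + (-1 : ℂ) • y := by simp [sub_eq_add_neg]
  have hs2 : x - Complex.I • y = x + (-Complex.I) • y := by simp [sub_eq_add_neg]
  rw [hs1, hs2]
  rw [show x + y = x + (1 : ℂ) • y by rw [one_smul]]
  rw [h.inner_self_expand (1 : ℂ) (1 : ℂ) (by norm_num) (by simp),
    h.inner_self_expand (-1 : ℂ) (-1 : ℂ) (by norm_num) (by simp),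
    h.inner_self_expand Complex.I (-Complex.I)
      (by simp [Complex.I_mul_I]) (by simp [Complex.star_def, Complex.conj_I]),
    h.inner_self_expand (-Complex.I) Complex.I
      (by simp [Complex.I_mul_I]) (by simp [Complex.star_def, Complex.conj_I])]
  match_scalars <;> ring_nf <;> norm_num [Complex.I_sq]

lemma norm_inner_le_of_le {x y : X₀} {cx cy : ℝ} (hx : ‖x‖ ≤ cx) (hy : ‖y‖ ≤ cy) :
    ‖h.inner x y‖ ≤ (cx + cy) ^ 2 := by
  have key : (4:ℝ) * ‖h.inner x y‖ ≤ 4 * (cx + cy) ^ 2 := by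
    have h0 : ‖(4 : ℂ) • h.inner x y‖ = 4 * ‖h.inner x y‖ := by
      rw [norm_smul]; norm_num
    have hb : ∀ z : X₀, ‖z‖ ≤ cx + cy → ‖h.inner z z‖ ≤ (cx + cy) ^ 2 := by
      intro z hz
      rw [h.norm_inner_self]
      exact pow_le_pow_left₀ (norm_nonneg _) hz 2
    have h1 : ‖h.inner (x + y) (x + y)‖ ≤ (cx + cy) ^ 2 :=
      hb _ ((norm_add_le _ _).trans (add_le_add hx hy))
    have h2 : ‖h.inner (x - y) (x - y)‖ ≤ (cx + cy) ^ 2 :=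
      hb _ ((norm_sub_le _ _).trans (add_le_add hx hy))
    have h3 : ‖h.inner (x + Complex.I • y) (x + Complex.I • y)‖ ≤ (cx + cy) ^ 2 := by
      refine hb _ ((norm_add_le _ _).trans (add_le_add hx ?_))
      rw [norm_smul, Complex.norm_I, one_mul]; exact hy
    have h4 : ‖h.inner (x - Complex.I • y) (x - Complex.I • y)‖ ≤ (cx + cy) ^ 2 := by
      refine hb _ ((norm_sub_le _ _).trans (add_le_add hx ?_))
      rw [norm_smul, Complex.norm_I, one_mul]; exact hy
    calc (4:ℝ) * ‖h.inner x y‖ = ‖(4 : ℂ) • h.inner x y‖ := h0.symm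
      _ = ‖h.inner (x + y) (x + y) - h.inner (x - y) (x - y)
        - Complex.I • h.inner (x + Complex.I • y) (x + Complex.I • y)
        + Complex.I • h.inner (x - Complex.I • y) (x - Complex.I • y)‖ := by
          rw [h.polarization]
      _ ≤ ‖h.inner (x + y) (x + y) - h.inner (x - y) (x - y)
        - Complex.I • h.inner (x + Complex.I • y) (x + Complex.I • y)‖
        + ‖Complex.I • h.inner (x - Complex.I • y) (x - Complex.I • y)‖ := norm_add_le _ _
      _ ≤ ‖h.inner (x + y) (x + y) - h.inner (x - y) (x - y)‖
        + ‖Complex.I • h.inner (x + Complex.I • y) (x + Complex.I • y)‖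
        + ‖Complex.I • h.inner (x - Complex.I • y) (x - Complex.I • y)‖ := by
          gcongr
          exact norm_sub_le _ _
      _ ≤ ‖h.inner (x + y) (x + y)‖ + ‖h.inner (x - y) (x - y)‖
        + ‖Complex.I • h.inner (x + Complex.I • y) (x + Complex.I • y)‖
        + ‖Complex.I • h.inner (x - Complex.I • y) (x - Complex.I • y)‖ := by
          gcongr
          exact norm_sub_le _ _
      _ = ‖h.inner (x + y) (x + y)‖ + ‖h.inner (x - y) (x - y)‖
        + ‖h.inner (x + Complex.I • y) (x + Complex.I • y)‖
        + ‖h.inner (x - Complex.I • y) (x - Complex.I • y)‖ := by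
          rw [norm_smul, norm_smul, Complex.norm_I, one_mul, one_mul]
      _ ≤ (cx + cy) ^ 2 + (cx + cy) ^ 2 + (cx + cy) ^ 2 + (cx + cy) ^ 2 := by
          gcongr
      _ = 4 * (cx + cy) ^ 2 := by ring
  linarith

/-- Cauchy-Schwarz with a weak constant, sufficient for our purposes. -/
lemma norm_inner_le4 (x y : X₀) : ‖h.inner x y‖ ≤ 4 * ‖x‖ * ‖y‖ := by
  rcases eq_or_ne x 0 with rfl | hx
  · rw [h.inner_zero_left, norm_zero, norm_zero]
    simp
  rcases eq_or_ne y 0 with rfl | hy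
  · rw [h.inner_zero_right, norm_zero, norm_zero]
    simp
  have hx' : (0:ℝ) < ‖x‖ := norm_pos_iff.mpr hx
  have hy' : (0:ℝ) < ‖y‖ := norm_pos_iff.mpr hy
  set t : ℝ := Real.sqrt (‖y‖ / ‖x‖) with ht
  have ht' : 0 < t := Real.sqrt_pos.mpr (by positivity)
  have ht2 : t * t = ‖y‖ / ‖x‖ := Real.mul_self_sqrt (by positivity)
  have h5 : t * t * ‖x‖ = ‖y‖ := by rw [ht2]; field_simp
  have key : h.inner (((t:ℝ) : ℂ) • x) (((t⁻¹:ℝ) : ℂ) • y) = h.inner x y := by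
    rw [h.inner_smulc_left, h.inner_smul_complex, smul_smul, Complex.star_def,
      Complex.conj_ofReal]
    have : ((t:ℝ) : ℂ) * ((t⁻¹:ℝ) : ℂ) = 1 := by
      rw [← Complex.ofReal_mul, mul_inv_cancel₀ ht'.ne', Complex.ofReal_one]
    rw [this, one_smul]
  have hnx : ‖((t:ℝ) : ℂ) • x‖ = t * ‖x‖ := by
    rw [norm_smul, Complex.norm_real, Real.norm_eq_abs, abs_of_pos ht']
  have hny : ‖((t⁻¹:ℝ) : ℂ) • y‖ = t⁻¹ * ‖y‖ := by
    rw [norm_smul, Complex.norm_real, Real.norm_eq_abs, abs_of_pos (by positivity)]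
  have hcy : t⁻¹ * ‖y‖ = t * ‖x‖ := by
    rw [← h5]
    field_simp
  calc ‖h.inner x y‖ = ‖h.inner (((t:ℝ) : ℂ) • x) (((t⁻¹:ℝ) : ℂ) • y)‖ := by rw [key]
    _ ≤ (t * ‖x‖ + t⁻¹ * ‖y‖) ^ 2 := h.norm_inner_le_of_le hnx.le hny.le
    _ = (t * ‖x‖ + t * ‖x‖) ^ 2 := by rw [hcy]
    _ = 4 * ((t * t * ‖x‖) * ‖x‖) := by ring
    _ = 4 * ‖x‖ * ‖y‖ := by rw [h5]; ring

end RHM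


open scoped CStarAlgebra in
lemma isClosed_star_mul_self (C : Type u) [NonUnitalCStarAlgebra C] :
    IsClosed {x : C | ∃ b, x = star b * b} := by
  letI : PartialOrder C⁺¹ := CStarAlgebra.spectralOrder _
  letI : StarOrderedRing C⁺¹ := CStarAlgebra.spectralOrderedRing _
  have hkey : {x : C | ∃ b, x = star b * b} =
      ((↑) : C → C⁺¹) ⁻¹' {y : C⁺¹ | 0 ≤ y} := by
    ext x
    simp only [Set.mem_setOf_eq, Set.mem_preimage]
    constructor
    · rintro ⟨b, rfl⟩
      rw [Unitization.inr_mul, Unitization.inr_star]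
      exact star_mul_self_nonneg _
    · intro hx
      have hsa' : IsSelfAdjoint ((x : C⁺¹)) := .of_nonneg hx
      have hsa : IsSelfAdjoint x := (Unitization.isSelfAdjoint_inr (R := ℂ)).mp hsa'
      have hspec : ∀ t ∈ quasispectrum ℝ x, 0 ≤ t := by
        rw [Unitization.quasispectrum_eq_spectrum_inr' ℝ ℂ x]
        exact spectrum_nonneg_of_nonneg hx
      refine ⟨cfcₙ Real.sqrt x, ?_⟩
      have hb : IsSelfAdjoint (cfcₙ Real.sqrt x) := cfcₙ_predicate _ _
      rw [hb.star_eq, ← cfcₙ_mul Real.sqrt Real.sqrt x]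
      conv_lhs => rw [← cfcₙ_id ℝ x]
      apply cfcₙ_congr
      intro t ht
      exact (Real.mul_self_sqrt (hspec t ht)).symm
  rw [hkey]
  exact (CStarAlgebra.isClosed_nonneg).preimage (Unitization.isometry_inr (𝕜 := ℂ)).continuous


lemma exists_bilin_extension {E F G : Type u} [NormedAddCommGroup E] [NormedSpace ℂ E]
    [NormedAddCommGroup F] [NormedSpace ℂ F] [NormedAddCommGroup G] [NormedSpace ℂ G]
    [CompleteSpace G] (ME : Submodule ℂ E) (MF : Submodule ℂ F)
    (hME : Dense (ME : Set E)) (hMF : Dense (MF : Set F))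
    (b : E → F → G) (C : ℝ) (hC : 0 ≤ C)
    (haddl : ∀ u ∈ ME, ∀ u' ∈ ME, ∀ v ∈ MF, b (u + u') v = b u v + b u' v)
    (haddr : ∀ u ∈ ME, ∀ v ∈ MF, ∀ v' ∈ MF, b u (v + v') = b u v + b u v')
    (hsmull : ∀ (c : ℝ), ∀ u ∈ ME, ∀ v ∈ MF, b (c • u) v = c • b u v)
    (hsmulr : ∀ (c : ℂ), ∀ u ∈ ME, ∀ v ∈ MF, b u (c • v) = c • b u v)
    (hbound : ∀ u ∈ ME, ∀ v ∈ MF, ‖b u v‖ ≤ C * ‖u‖ * ‖v‖) :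
    ∃ B : E →L[ℝ] F →L[ℂ] G, ∀ u ∈ ME, ∀ v ∈ MF, B u v = b u v := by
  -- the inclusion of `MF` is a dense isometric embedding
  have hFiso : Isometry (⇑(MF.subtypeL)) :=
    AddMonoidHomClass.isometry_of_norm _ (fun x => rfl)
  have hFui : IsUniformInducing (⇑(MF.subtypeL)) := hFiso.isUniformInducing
  have hFrange : Set.range (⇑(MF.subtypeL)) = (MF : Set F) := Subtype.range_coe
  have hFdr : DenseRange (⇑(MF.subtypeL)) := by
    rw [DenseRange, hFrange]; exact hMF
  -- the inclusion of `ME` over ℝ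
  have hEiso : Isometry (⇑((ME.subtypeL).restrictScalars ℝ)) :=
    AddMonoidHomClass.isometry_of_norm _ (fun x => rfl)
  have hEui : IsUniformInducing (⇑((ME.subtypeL).restrictScalars ℝ)) := hEiso.isUniformInducing
  have hErange : Set.range (⇑((ME.subtypeL).restrictScalars ℝ)) = (ME : Set E) :=
    Subtype.range_coe
  have hEdr : DenseRange (⇑((ME.subtypeL).restrictScalars ℝ)) := by
    rw [DenseRange, hErange]; exact hME
  -- step 1 : for fixed `u : ME`, the continuous linear map `v ↦ b u v` on `MF`
  set g : ↥ME → (↥MF →L[ℂ] G) := fun u => LinearMap.mkContinuous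
    { toFun := fun v => b (u : E) (v : F)
      map_add' := fun v v' => haddr _ u.2 _ v.2 _ v'.2
      map_smul' := fun c v => hsmulr c _ u.2 _ v.2 }
    (C * ‖u‖) (fun v => hbound _ u.2 _ v.2) with hg
  -- extend it to all of `F`
  set gext : ↥ME → (F →L[ℂ] G) := fun u => (g u).extend MF.subtypeL with hgext'
  have hgext : ∀ (u : ↥ME) (v : ↥MF), gext u (v : F) = b (u : E) (v : F) := by
    intro u v
    have := ContinuousLinearMap.extend_eq (g u) hFdr hFui v
    exact this
  have hgb : ∀ (u : ↥ME) (w : F), ‖gext u w‖ ≤ (C * ‖u‖) * ‖w‖ := by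
    intro u w
    have hclosed : IsClosed {w : F | ‖gext u w‖ ≤ (C * ‖u‖) * ‖w‖} :=
      isClosed_le ((gext u).continuous.norm) (continuous_const.mul continuous_norm)
    have hsub : (MF : Set F) ⊆ {w : F | ‖gext u w‖ ≤ (C * ‖u‖) * ‖w‖} := by
      intro v hv
      have h1 : gext u v = b (u : E) v := hgext u ⟨v, hv⟩
      simp only [Set.mem_setOf_eq, h1]
      exact hbound _ u.2 _ hv
    have : closure (MF : Set F) ⊆ {w : F | ‖gext u w‖ ≤ (C * ‖u‖) * ‖w‖} :=
      closure_minimal hsub hclosed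
    exact this (by rw [hMF.closure_eq]; trivial)
  -- step 2 : `u ↦ gext u` as a continuous ℝ-linear map
  have hadd2 : ∀ u u' : ↥ME, gext (u + u') = gext u + gext u' := by
    intro u u'
    apply ContinuousLinearMap.coeFn_injective
    apply Continuous.ext_on hMF (gext (u + u')).continuous
      ((gext u).continuous.add (gext u').continuous)
    intro v hv
    have h1 := hgext (u + u') ⟨v, hv⟩
    have h2 := hgext u ⟨v, hv⟩
    have h3 := hgext u' ⟨v, hv⟩
    simp only [Submodule.coe_add] at h1
    rw [haddl _ u.2 _ u'.2 _ hv] at h1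
    simp only [Pi.add_apply]
    rw [h1, h2, h3]
  have hsmul2 : ∀ (r : ℝ) (u : ↥ME), gext (r • u) = r • gext u := by
    intro r u
    apply ContinuousLinearMap.coeFn_injective
    apply Continuous.ext_on hMF (gext (r • u)).continuous
      ((gext u).continuous.const_smul r)
    intro v hv
    have h1 := hgext (r • u) ⟨v, hv⟩
    have h2 := hgext u ⟨v, hv⟩
    have hco : ((r • u : ↥ME) : E) = r • (u : E) := rfl
    rw [hco, hsmull r _ u.2 _ hv] at h1
    simp only [Pi.smul_apply]
    rw [h1, h2]
  set g2 : ↥ME →L[ℝ] (F →L[ℂ] G) := LinearMap.mkContinuous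
    { toFun := fun u => gext u
      map_add' := hadd2
      map_smul' := fun r u => hsmul2 r u }
    C (fun u => by
      refine ContinuousLinearMap.opNorm_le_bound _ (mul_nonneg hC (norm_nonneg _)) ?_
      exact fun w => hgb u w) with hg2
  have hg2app : ∀ u : ↥ME, g2 u = gext u := fun u => rfl
  -- step 3 : extend over `E`
  refine ⟨g2.extend ((ME.subtypeL).restrictScalars ℝ), ?_⟩
  intro u hu v hv
  have h1 : g2.extend ((ME.subtypeL).restrictScalars ℝ) u = g2 ⟨u, hu⟩ :=
    ContinuousLinearMap.extend_eq g2 hEdr hEui ⟨u, hu⟩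
  rw [h1, hg2app]
  exact hgext ⟨u, hu⟩ ⟨v, hv⟩

end AuxLemmas

lemma RHM.ext' {A₀ X₀ : Type u} [NonUnitalCStarAlgebra A₀] [NormedAddCommGroup X₀]
    [NormedSpace ℂ X₀] {h1 h2 : RHM A₀ X₀} (hs : h1.smul = h2.smul)
    (hi : h1.inner = h2.inner) : h1 = h2 := by
  cases h1
  cases h2
  dsimp only at hs hi
  subst hs
  subst hi
  rfl


open Filter in
/-- the direct limit of a directed sequence of right Hilbert C*-modules
carries a unique (continuous) right Hilbert C*-module structure over the direct limit
algebra compatible with the canonical maps, whose induced norm is the limit norm. -/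
theorem statement4 {Aseq : ℕ → Type u} [∀ n, NonUnitalCStarAlgebra (Aseq n)]
    {Xseq : ℕ → Type u} [∀ n, NormedAddCommGroup (Xseq n)] [∀ n, NormedSpace ℂ (Xseq n)]
    (hseq : ∀ n, RHM (Aseq n) (Xseq n))
    (φA : ∀ n, Aseq n →⋆ₙₐ[ℂ] Aseq (n + 1)) (φX : ∀ n, Xseq n →ₗ[ℂ] Xseq (n + 1))
    (hhom : ∀ n, IsModHom (hseq n) (hseq (n + 1)) (φA n) (φX n))
    -- the iterated connecting maps `φ_{n,m}` for `m ≥ n`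
    (φAc : ∀ n m, Aseq n → Aseq m) (φXc : ∀ n m, Xseq n → Xseq m)
    (hφAc₀ : ∀ n a, φAc n n a = a)
    (hφAc₁ : ∀ n m a, n ≤ m → φAc n (m + 1) a = φA m (φAc n m a))
    (hφXc₀ : ∀ n x, φXc n n x = x)
    (hφXc₁ : ∀ n m x, n ≤ m → φXc n (m + 1) x = φX m (φXc n m x))
    -- the direct limit C*-algebra `A∞` with canonical maps
    {Ainf : Type u} [NonUnitalCStarAlgebra Ainf] (lamA : ∀ n, Aseq n →⋆ₙₐ[ℂ] Ainf)
    (hlamA : ∀ n a, lamA (n + 1) (φA n a) = lamA n a)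
    (hlamAdense : closure (⋃ n, Set.range (lamA n)) = Set.univ)
    (hlamAnorm : ∀ n a, Tendsto (fun m => ‖φAc n m a‖) atTop (nhds ‖lamA n a‖))
    -- the direct limit Banach space `X∞` with canonical maps
    {Xinf : Type u} [NormedAddCommGroup Xinf] [NormedSpace ℂ Xinf] [CompleteSpace Xinf]
    (lamX : ∀ n, Xseq n →ₗ[ℂ] Xinf)
    (hlamX : ∀ n x, lamX (n + 1) (φX n x) = lamX n x)
    (hlamXdense : closure (⋃ n, Set.range (lamX n)) = Set.univ)
    (hlamXnorm : ∀ n x, Tendsto (fun m => ‖φXc n m x‖) atTop (nhds ‖lamX n x‖)) :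
    ∃! h : RHM Ainf Xinf,
      Continuous (fun p : Xinf × Ainf => h.smul p.1 p.2) ∧
      Continuous (fun p : Xinf × Xinf => h.inner p.1 p.2) ∧
      (∀ n x a, h.smul (lamX n x) (lamA n a) = lamX n ((hseq n).smul x a)) ∧
      (∀ n x y, h.inner (lamX n x) (lamX n y) = lamA n ((hseq n).inner x y)) := by
  classical
  -- dense sets
  have denseX : Dense (⋃ n, Set.range (lamX n)) := dense_iff_closure_eq.mpr hlamXdense
  have denseA : Dense (⋃ n, Set.range (lamA n)) := dense_iff_closure_eq.mpr hlamAdense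
  -- push lemmas
  have pushX : ∀ n m, n ≤ m → ∀ x, lamX m (φXc n m x) = lamX n x := by
    intro n m hnm
    induction m, hnm using Nat.le_induction with
    | base => intro x; rw [hφXc₀]
    | succ m hm ih => intro x; rw [hφXc₁ n m x hm, hlamX, ih]
  have pushA : ∀ n m, n ≤ m → ∀ a, lamA m (φAc n m a) = lamA n a := by
    intro n m hnm
    induction m, hnm using Nat.le_induction with
    | base => intro a; rw [hφAc₀]
    | succ m hm ih => intro a; rw [hφAc₁ n m a hm, hlamA, ih]
  -- compatibility of iterated connecting maps
  have compI : ∀ n m, n ≤ m → ∀ x y, φAc n m ((hseq n).inner x y)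
      = (hseq m).inner (φXc n m x) (φXc n m y) := by
    intro n m hnm
    induction m, hnm using Nat.le_induction with
    | base => intro x y; rw [hφAc₀, hφXc₀, hφXc₀]
    | succ m hm ih =>
        intro x y
        rw [hφAc₁ _ _ _ hm, hφXc₁ _ _ _ hm, hφXc₁ _ _ _ hm, ih, (hhom m).2]
  have compS : ∀ n m, n ≤ m → ∀ x a, φXc n m ((hseq n).smul x a)
      = (hseq m).smul (φXc n m x) (φAc n m a) := by
    intro n m hnm
    induction m, hnm using Nat.le_induction with
    | base => intro x a; rw [hφXc₀, hφXc₀, hφAc₀]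
    | succ m hm ih =>
        intro x a
        rw [hφXc₁ _ _ _ hm, hφXc₁ _ _ _ hm, hφAc₁ _ _ _ hm, ih, (hhom m).1]
  -- norm estimates in the limit
  have E1 : ∀ n x y, ‖lamA n ((hseq n).inner x y)‖ ≤ 4 * ‖lamX n x‖ * ‖lamX n y‖ := by
    intro n x y
    have t1 := hlamAnorm n ((hseq n).inner x y)
    have t2 : Tendsto (fun m => 4 * ‖φXc n m x‖ * ‖φXc n m y‖) atTop
        (nhds (4 * ‖lamX n x‖ * ‖lamX n y‖)) :=
      ((hlamXnorm n x).const_mul 4).mul (hlamXnorm n y)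
    refine le_of_tendsto_of_tendsto t1 t2 ?_
    filter_upwards [Filter.eventually_ge_atTop n] with m hm
    show ‖φAc n m ((hseq n).inner x y)‖ ≤ 4 * ‖φXc n m x‖ * ‖φXc n m y‖
    rw [compI n m hm]
    exact (hseq m).norm_inner_le4 _ _
  have E2 : ∀ n x a, ‖lamX n ((hseq n).smul x a)‖ ≤ ‖lamX n x‖ * ‖lamA n a‖ := by
    intro n x a
    have t1 := hlamXnorm n ((hseq n).smul x a)
    have t2 : Tendsto (fun m => ‖φXc n m x‖ * ‖φAc n m a‖) atTop
        (nhds (‖lamX n x‖ * ‖lamA n a‖)) := (hlamXnorm n x).mul (hlamAnorm n a)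
    refine le_of_tendsto_of_tendsto t1 t2 ?_
    filter_upwards [Filter.eventually_ge_atTop n] with m hm
    show ‖φXc n m ((hseq n).smul x a)‖ ≤ ‖φXc n m x‖ * ‖φAc n m a‖
    rw [compS n m hm]
    exact (hseq m).norm_smul_le _ _
  have E3 : ∀ n x, ‖lamA n ((hseq n).inner x x)‖ = ‖lamX n x‖ ^ 2 := by
    intro n x
    have t1 := hlamAnorm n ((hseq n).inner x x)
    have t2 : Tendsto (fun m => ‖φXc n m x‖ ^ 2) atTop (nhds (‖lamX n x‖ ^ 2)) :=
      (hlamXnorm n x).pow 2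
    have heq : (fun m => ‖φAc n m ((hseq n).inner x x)‖) =ᶠ[atTop]
        (fun m => ‖φXc n m x‖ ^ 2) := by
      filter_upwards [Filter.eventually_ge_atTop n] with m hm
      rw [compI n m hm, (hseq m).norm_inner_self]
    exact tendsto_nhds_unique (t1.congr' heq) t2
  -- well-definedness, same level
  have W0 : ∀ N (X1 X2 Y1 Y2 : Xseq N), lamX N X1 = lamX N X2 → lamX N Y1 = lamX N Y2 →
      lamA N ((hseq N).inner X1 Y1) = lamA N ((hseq N).inner X2 Y2) := by
    intro N X1 X2 Y1 Y2 hx hy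
    have hkey : lamA N ((hseq N).inner X1 Y1) - lamA N ((hseq N).inner X2 Y2)
        = lamA N ((hseq N).inner (X1 - X2) Y1) + lamA N ((hseq N).inner X2 (Y1 - Y2)) := by
      rw [(hseq N).inner_sub_left, (hseq N).inner_sub_right, map_sub, map_sub]
      abel
    have hz1 : lamX N (X1 - X2) = 0 := by rw [map_sub, hx, sub_self]
    have hz2 : lamX N (Y1 - Y2) = 0 := by rw [map_sub, hy, sub_self]
    have hb : ‖lamA N ((hseq N).inner X1 Y1) - lamA N ((hseq N).inner X2 Y2)‖ ≤ 0 := by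
      rw [hkey]
      calc ‖lamA N ((hseq N).inner (X1 - X2) Y1) + lamA N ((hseq N).inner X2 (Y1 - Y2))‖
          ≤ ‖lamA N ((hseq N).inner (X1 - X2) Y1)‖ + ‖lamA N ((hseq N).inner X2 (Y1 - Y2))‖ :=
            norm_add_le _ _
        _ ≤ 4 * ‖lamX N (X1 - X2)‖ * ‖lamX N Y1‖ + 4 * ‖lamX N X2‖ * ‖lamX N (Y1 - Y2)‖ :=
            add_le_add (E1 _ _ _) (E1 _ _ _)
        _ = 0 := by rw [hz1, hz2]; simp
    exact sub_eq_zero.mp (norm_le_zero_iff.mp hb)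
  have W0S : ∀ N (X1 X2 : Xseq N) (A1 A2 : Aseq N), lamX N X1 = lamX N X2 →
      lamA N A1 = lamA N A2 →
      lamX N ((hseq N).smul X1 A1) = lamX N ((hseq N).smul X2 A2) := by
    intro N X1 X2 A1 A2 hx ha
    have hkey : lamX N ((hseq N).smul X1 A1) - lamX N ((hseq N).smul X2 A2)
        = lamX N ((hseq N).smul (X1 - X2) A1) + lamX N ((hseq N).smul X2 (A1 - A2)) := by
      have e1 : (hseq N).smul (X1 - X2) A1 = (hseq N).smul X1 A1 - (hseq N).smul X2 A1 := by
        have := (hseq N).add_smul (X1 - X2) X2 A1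
        rw [sub_add_cancel] at this
        rw [this]; abel
      have e2 : (hseq N).smul X2 (A1 - A2) = (hseq N).smul X2 A1 - (hseq N).smul X2 A2 := by
        have := (hseq N).smul_add X2 (A1 - A2) A2
        rw [sub_add_cancel] at this
        rw [this]; abel
      rw [e1, e2, map_sub, map_sub]
      abel
    have hz1 : lamX N (X1 - X2) = 0 := by rw [map_sub, hx, sub_self]
    have hz2 : lamA N (A1 - A2) = 0 := by rw [map_sub, ha, sub_self]
    have hb : ‖lamX N ((hseq N).smul X1 A1) - lamX N ((hseq N).smul X2 A2)‖ ≤ 0 := by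
      rw [hkey]
      calc ‖lamX N ((hseq N).smul (X1 - X2) A1) + lamX N ((hseq N).smul X2 (A1 - A2))‖
          ≤ ‖lamX N ((hseq N).smul (X1 - X2) A1)‖ + ‖lamX N ((hseq N).smul X2 (A1 - A2))‖ :=
            norm_add_le _ _
        _ ≤ ‖lamX N (X1 - X2)‖ * ‖lamA N A1‖ + ‖lamX N X2‖ * ‖lamA N (A1 - A2)‖ :=
            add_le_add (E2 _ _ _) (E2 _ _ _)
        _ = 0 := by rw [hz1, hz2]; simp
    exact sub_eq_zero.mp (norm_le_zero_iff.mp hb)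
  -- cross-level well-definedness
  have W1 : ∀ n m (x y : Xseq n) (x' y' : Xseq m), lamX n x = lamX m x' →
      lamX n y = lamX m y' →
      lamA n ((hseq n).inner x y) = lamA m ((hseq m).inner x' y') := by
    intro n m x y x' y' hx hy
    rw [← pushA n (max n m) (le_max_left _ _), ← pushA m (max n m) (le_max_right _ _),
      compI n (max n m) (le_max_left _ _), compI m (max n m) (le_max_right _ _)]
    refine W0 _ _ _ _ _ ?_ ?_
    · rw [pushX n (max n m) (le_max_left _ _), pushX m (max n m) (le_max_right _ _)]
      exact hx
    · rw [pushX n (max n m) (le_max_left _ _), pushX m (max n m) (le_max_right _ _)]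
      exact hy
  have W1S : ∀ n m (x : Xseq n) (a : Aseq n) (x' : Xseq m) (a' : Aseq m),
      lamX n x = lamX m x' → lamA n a = lamA m a' →
      lamX n ((hseq n).smul x a) = lamX m ((hseq m).smul x' a') := by
    intro n m x a x' a' hx ha
    rw [← pushX n (max n m) (le_max_left _ _), ← pushX m (max n m) (le_max_right _ _),
      compS n (max n m) (le_max_left _ _), compS m (max n m) (le_max_right _ _)]
    refine W0S _ _ _ _ _ ?_ ?_
    · rw [pushX n (max n m) (le_max_left _ _), pushX m (max n m) (le_max_right _ _)]
      exact hx
    · rw [pushA n (max n m) (le_max_left _ _), pushA m (max n m) (le_max_right _ _)]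
      exact ha
  -- membership helpers
  have memX : ∀ n x, lamX n x ∈ ⋃ k, Set.range (lamX k) :=
    fun n x => Set.mem_iUnion.mpr ⟨n, ⟨x, rfl⟩⟩
  have memA : ∀ n a, lamA n a ∈ ⋃ k, Set.range (lamA k) :=
    fun n a => Set.mem_iUnion.mpr ⟨n, ⟨a, rfl⟩⟩
  -- common level representatives
  have rep1 : ∀ u ∈ ⋃ n, Set.range (lamX n), ∃ n x, lamX n x = u := by
    intro u hu
    simp only [Set.mem_iUnion, Set.mem_range] at hu
    obtain ⟨n, x, rfl⟩ := hu
    exact ⟨n, x, rfl⟩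
  have rep1A : ∀ a ∈ ⋃ n, Set.range (lamA n), ∃ n b, lamA n b = a := by
    intro a ha
    simp only [Set.mem_iUnion, Set.mem_range] at ha
    obtain ⟨n, b, rfl⟩ := ha
    exact ⟨n, b, rfl⟩
  have rep2 : ∀ u ∈ ⋃ n, Set.range (lamX n), ∀ v ∈ ⋃ n, Set.range (lamX n),
      ∃ n x y, lamX n x = u ∧ lamX n y = v := by
    intro u hu v hv
    obtain ⟨n, x, rfl⟩ := rep1 u hu
    obtain ⟨m, y, rfl⟩ := rep1 v hv
    exact ⟨max n m, φXc n _ x, φXc m _ y, pushX n _ (le_max_left _ _) x,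
      pushX m _ (le_max_right _ _) y⟩
  have rep2XA : ∀ u ∈ ⋃ n, Set.range (lamX n), ∀ a ∈ ⋃ n, Set.range (lamA n),
      ∃ n x b, lamX n x = u ∧ lamA n b = a := by
    intro u hu a ha
    obtain ⟨n, x, rfl⟩ := rep1 u hu
    obtain ⟨m, b, rfl⟩ := rep1A a ha
    exact ⟨max n m, φXc n _ x, φAc m _ b, pushX n _ (le_max_left _ _) x,
      pushA m _ (le_max_right _ _) b⟩
  have rep3XXX : ∀ u ∈ ⋃ n, Set.range (lamX n), ∀ v ∈ ⋃ n, Set.range (lamX n),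
      ∀ w ∈ ⋃ n, Set.range (lamX n),
      ∃ n x y z, lamX n x = u ∧ lamX n y = v ∧ lamX n z = w := by
    intro u hu v hv w hw
    obtain ⟨n, x, rfl⟩ := rep1 u hu
    obtain ⟨m, y, rfl⟩ := rep1 v hv
    obtain ⟨k, z, rfl⟩ := rep1 w hw
    refine ⟨max n (max m k), φXc n _ x, φXc m _ y, φXc k _ z, ?_, ?_, ?_⟩
    · exact pushX n _ (le_max_left _ _) x
    · exact pushX m _ (le_trans (le_max_left _ _) (le_max_right _ _)) y
    · exact pushX k _ (le_trans (le_max_right _ _) (le_max_right _ _)) z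
  have rep3XXA : ∀ u ∈ ⋃ n, Set.range (lamX n), ∀ v ∈ ⋃ n, Set.range (lamX n),
      ∀ a ∈ ⋃ n, Set.range (lamA n),
      ∃ n x y b, lamX n x = u ∧ lamX n y = v ∧ lamA n b = a := by
    intro u hu v hv a ha
    obtain ⟨n, x, rfl⟩ := rep1 u hu
    obtain ⟨m, y, rfl⟩ := rep1 v hv
    obtain ⟨k, b, rfl⟩ := rep1A a ha
    refine ⟨max n (max m k), φXc n _ x, φXc m _ y, φAc k _ b, ?_, ?_, ?_⟩
    · exact pushX n _ (le_max_left _ _) x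
    · exact pushX m _ (le_trans (le_max_left _ _) (le_max_right _ _)) y
    · exact pushA k _ (le_trans (le_max_right _ _) (le_max_right _ _)) b
  have rep3XAA : ∀ u ∈ ⋃ n, Set.range (lamX n), ∀ a ∈ ⋃ n, Set.range (lamA n),
      ∀ b ∈ ⋃ n, Set.range (lamA n),
      ∃ n x c d, lamX n x = u ∧ lamA n c = a ∧ lamA n d = b := by
    intro u hu a ha b hb
    obtain ⟨n, x, rfl⟩ := rep1 u hu
    obtain ⟨m, c, rfl⟩ := rep1A a ha
    obtain ⟨k, d, rfl⟩ := rep1A b hb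
    refine ⟨max n (max m k), φXc n _ x, φAc m _ c, φAc k _ d, ?_, ?_, ?_⟩
    · exact pushX n _ (le_max_left _ _) x
    · exact pushA m _ (le_trans (le_max_left _ _) (le_max_right _ _)) c
    · exact pushA k _ (le_trans (le_max_right _ _) (le_max_right _ _)) d
  -- the dense submodules
  let DXs : Submodule ℂ Xinf :=
    { carrier := ⋃ n, Set.range (lamX n)
      zero_mem' := Set.mem_iUnion.mpr ⟨0, ⟨0, map_zero _⟩⟩
      add_mem' := by
        intro u v hu hv
        obtain ⟨n, x, y, hx, hy⟩ := rep2 u hu v hv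
        rw [← hx, ← hy, ← map_add]
        exact memX n _
      smul_mem' := by
        intro c u hu
        obtain ⟨n, x, rfl⟩ := rep1 u hu
        rw [← map_smul]
        exact memX n _ }
  let DAs : Submodule ℂ Ainf :=
    { carrier := ⋃ n, Set.range (lamA n)
      zero_mem' := Set.mem_iUnion.mpr ⟨0, ⟨0, map_zero _⟩⟩
      add_mem' := by
        intro a b ha hb
        obtain ⟨n, x, rfl⟩ := rep1A a ha
        obtain ⟨m, y, rfl⟩ := rep1A b hb
        rw [← pushA n (max n m) (le_max_left _ _) x, ← pushA m (max n m) (le_max_right _ _) y,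
          ← map_add]
        exact memA _ _
      smul_mem' := by
        intro c a ha
        obtain ⟨n, x, rfl⟩ := rep1A a ha
        rw [← map_smul]
        exact memA n _ }
  have hDXmem : ∀ n x, lamX n x ∈ DXs := fun n x => memX n x
  have hDAmem : ∀ n a, lamA n a ∈ DAs := fun n a => memA n a
  have hDXset : (DXs : Set Xinf) = ⋃ n, Set.range (lamX n) := rfl
  have hDAset : (DAs : Set Ainf) = ⋃ n, Set.range (lamA n) := rfl
  have denseDX : Dense (DXs : Set Xinf) := by rw [hDXset]; exact denseX
  have denseDA : Dense (DAs : Set Ainf) := by rw [hDAset]; exact denseA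
  -- raw inner product
  have hbIex : ∃ bI : Xinf → Xinf → Ainf, ∀ n x y,
      bI (lamX n x) (lamX n y) = lamA n ((hseq n).inner x y) := by
    refine ⟨fun u v => if hp : ∃ p : Σ n : ℕ, Xseq n × Xseq n,
        lamX p.1 p.2.1 = u ∧ lamX p.1 p.2.2 = v then
        lamA hp.choose.1 ((hseq hp.choose.1).inner hp.choose.2.1 hp.choose.2.2) else 0, ?_⟩
    intro n x y
    have hp : ∃ p : Σ n : ℕ, Xseq n × Xseq n,
        lamX p.1 p.2.1 = lamX n x ∧ lamX p.1 p.2.2 = lamX n y := ⟨⟨n, (x, y)⟩, rfl, rfl⟩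
    dsimp only
    rw [dif_pos hp]
    exact W1 _ n _ _ x y hp.choose_spec.1 hp.choose_spec.2
  obtain ⟨bI, bI_eq⟩ := hbIex
  -- raw module action
  have hbSex : ∃ bS : Xinf → Ainf → Xinf, ∀ n x a,
      bS (lamX n x) (lamA n a) = lamX n ((hseq n).smul x a) := by
    refine ⟨fun u r => if hp : ∃ p : Σ n : ℕ, Xseq n × Aseq n,
        lamX p.1 p.2.1 = u ∧ lamA p.1 p.2.2 = r then
        lamX hp.choose.1 ((hseq hp.choose.1).smul hp.choose.2.1 hp.choose.2.2) else 0, ?_⟩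
    intro n x a
    have hp : ∃ p : Σ n : ℕ, Xseq n × Aseq n,
        lamX p.1 p.2.1 = lamX n x ∧ lamA p.1 p.2.2 = lamA n a := ⟨⟨n, (x, a)⟩, rfl, rfl⟩
    dsimp only
    rw [dif_pos hp]
    exact W1S _ n _ _ x a hp.choose_spec.1 hp.choose_spec.2
  obtain ⟨bS, bS_eq⟩ := hbSex
  -- extend the inner product
  obtain ⟨IB, hIB⟩ : ∃ B : Xinf →L[ℝ] Xinf →L[ℂ] Ainf,
      ∀ u ∈ DXs, ∀ v ∈ DXs, B u v = bI u v := by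
    refine exists_bilin_extension DXs DXs denseDX denseDX bI 4 (by norm_num) ?_ ?_ ?_ ?_ ?_
    · intro u hu u' hu' v hv
      obtain ⟨n, x, x', y, hx, hx', hy⟩ := rep3XXX u hu u' hu' v hv
      rw [← hx, ← hx', ← hy, ← map_add, bI_eq, bI_eq, bI_eq, (hseq n).inner_add_left, map_add]
    · intro u hu v hv v' hv'
      obtain ⟨n, x, y, y', hx, hy, hy'⟩ := rep3XXX u hu v hv v' hv'
      rw [← hx, ← hy, ← hy', ← map_add, bI_eq, bI_eq, bI_eq, (hseq n).inner_add_right, map_add]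
    · intro c u hu v hv
      obtain ⟨n, x, y, hx, hy⟩ := rep2 u hu v hv
      rw [← hx, ← hy, ← Complex.coe_smul, ← map_smul, bI_eq, bI_eq,
        (hseq n).inner_smulc_left, Complex.star_def, Complex.conj_ofReal, map_smul,
        Complex.coe_smul]
    · intro c u hu v hv
      obtain ⟨n, x, y, hx, hy⟩ := rep2 u hu v hv
      rw [← hx, ← hy, ← map_smul, bI_eq, bI_eq, (hseq n).inner_smul_complex, map_smul]
    · intro u hu v hv
      obtain ⟨n, x, y, hx, hy⟩ := rep2 u hu v hv
      rw [← hx, ← hy, bI_eq]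
      exact E1 n x y
  -- extend the module action
  obtain ⟨SB, hSB⟩ : ∃ B : Xinf →L[ℝ] Ainf →L[ℂ] Xinf,
      ∀ u ∈ DXs, ∀ r ∈ DAs, B u r = bS u r := by
    refine exists_bilin_extension DXs DAs denseDX denseDA bS 1 (by norm_num) ?_ ?_ ?_ ?_ ?_
    · intro u hu u' hu' r hr
      obtain ⟨n, x, x', a, hx, hx', ha⟩ := rep3XXA u hu u' hu' r hr
      rw [← hx, ← hx', ← ha, ← map_add, bS_eq, bS_eq, bS_eq, (hseq n).add_smul, map_add]
    · intro u hu r hr r' hr'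
      obtain ⟨n, x, a, a', hx, ha, ha'⟩ := rep3XAA u hu r hr r' hr'
      rw [← hx, ← ha, ← ha', ← map_add, bS_eq, bS_eq, bS_eq, (hseq n).smul_add, map_add]
    · intro c u hu r hr
      obtain ⟨n, x, a, hx, ha⟩ := rep2XA u hu r hr
      rw [← hx, ← ha, ← Complex.coe_smul, ← map_smul, bS_eq, bS_eq,
        (hseq n).smul_complex, map_smul, Complex.coe_smul]
    · intro c u hu r hr
      obtain ⟨n, x, a, hx, ha⟩ := rep2XA u hu r hr
      rw [← hx, ← ha, ← map_smul, bS_eq, bS_eq, (hseq n).smul_complex', map_smul]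
    · intro u hu r hr
      obtain ⟨n, x, a, hx, ha⟩ := rep2XA u hu r hr
      rw [← hx, ← ha, bS_eq, one_mul]
      exact E2 n x a
  have agreeI : ∀ n x y, IB (lamX n x) (lamX n y) = lamA n ((hseq n).inner x y) := by
    intro n x y
    rw [hIB _ (hDXmem n x) _ (hDXmem n y), bI_eq]
  have agreeS : ∀ n x a, SB (lamX n x) (lamA n a) = lamX n ((hseq n).smul x a) := by
    intro n x a
    rw [hSB _ (hDXmem n x) _ (hDAmem n a), bS_eq]
  -- continuity of the bilinear maps
  have contI : Continuous fun p : Xinf × Xinf => IB p.1 p.2 := by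
    have h1 : Continuous fun p : Xinf × Xinf => ((IB p.1 : Xinf →L[ℂ] Ainf), p.2) :=
      (IB.continuous.comp continuous_fst).prodMk continuous_snd
    exact isBoundedBilinearMap_apply.continuous.comp h1
  have contS : Continuous fun p : Xinf × Ainf => SB p.1 p.2 := by
    have h1 : Continuous fun p : Xinf × Ainf => ((SB p.1 : Ainf →L[ℂ] Xinf), p.2) :=
      (SB.continuous.comp continuous_fst).prodMk continuous_snd
    exact isBoundedBilinearMap_apply.continuous.comp h1
  -- the norm identity
  have hnorm : ∀ u : Xinf, ‖u‖ = Real.sqrt ‖IB u u‖ := by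
    have hfg : (fun u : Xinf => ‖u‖) = fun u => Real.sqrt ‖IB u u‖ := by
      refine Continuous.ext_on denseX continuous_norm ?_ ?_
      · exact Real.continuous_sqrt.comp
          ((contI.comp (continuous_id.prodMk continuous_id)).norm)
      · intro u hu
        obtain ⟨n, x, rfl⟩ := rep1 u hu
        dsimp only
        rw [agreeI, E3, Real.sqrt_sq (norm_nonneg _)]
    exact fun u => congrFun hfg u
  -- the Hilbert module structure
  refine ⟨{ smul := fun x a => SB x a
            inner := fun x y => IB x y
            smul_add := fun x a b => (SB x).map_add a b
            add_smul := fun x y a => by rw [map_add]; rfl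
            smul_mul := ?_
            smul_complex := ?_
            smul_complex' := fun c x a => (SB x).map_smul c a
            inner_add_right := fun x y z => (IB x).map_add y z
            inner_smul_right := ?_
            inner_smul_complex := fun c x y => (IB x).map_smul c y
            star_inner := ?_
            inner_self_nonneg := ?_
            inner_self_eq_zero := ?_
            norm_eq := hnorm }, ⟨contS, contI, agreeS, agreeI⟩, ?_⟩
  · -- smul_mul
    intro x a b
    have hfg : (fun p : Xinf × Ainf × Ainf => SB (SB p.1 p.2.1) p.2.2)
        = fun p => SB p.1 (p.2.1 * p.2.2) := by
      refine Continuous.ext_on (denseX.prod (denseA.prod denseA)) ?_ ?_ ?_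
      · exact contS.comp ((contS.comp (continuous_fst.prodMk
          (continuous_fst.comp continuous_snd))).prodMk
          (continuous_snd.comp continuous_snd))
      · exact contS.comp (continuous_fst.prodMk
          (((continuous_fst.comp continuous_snd).mul
            (continuous_snd.comp continuous_snd))))
      · rintro ⟨u, r, s⟩ ⟨hu, hr, hs⟩
        obtain ⟨n, x', a', b', hx, ha, hb⟩ := rep3XAA u hu r hr s hs
        simp only
        rw [← hx, ← ha, ← hb, agreeS, agreeS, (hseq n).smul_mul, ← map_mul, agreeS]
    exact congrFun hfg (x, a, b)
  · -- smul_complex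
    intro c x a
    have hfg : (fun p : Xinf × Ainf => SB (c • p.1) p.2) = fun p => c • SB p.1 p.2 := by
      refine Continuous.ext_on (denseX.prod denseA) ?_ ?_ ?_
      · exact contS.comp ((continuous_fst.const_smul c).prodMk continuous_snd)
      · exact contS.const_smul c
      · rintro ⟨u, r⟩ ⟨hu, hr⟩
        obtain ⟨n, x', a', hx, ha⟩ := rep2XA u hu r hr
        simp only
        rw [← hx, ← ha, ← map_smul, agreeS, agreeS, (hseq n).smul_complex, map_smul]
    exact congrFun hfg (x, a)
  · -- inner_smul_right
    intro x y a
    have hfg : (fun p : Xinf × Xinf × Ainf => IB p.1 (SB p.2.1 p.2.2))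
        = fun p => IB p.1 p.2.1 * p.2.2 := by
      refine Continuous.ext_on (denseX.prod (denseX.prod denseA)) ?_ ?_ ?_
      · exact contI.comp (continuous_fst.prodMk (contS.comp
          ((continuous_fst.comp continuous_snd).prodMk
            (continuous_snd.comp continuous_snd))))
      · exact (contI.comp (continuous_fst.prodMk
          (continuous_fst.comp continuous_snd))).mul (continuous_snd.comp continuous_snd)
      · rintro ⟨u, v, r⟩ ⟨hu, hv, hr⟩
        obtain ⟨n, x', y', a', hx, hy, ha⟩ := rep3XXA u hu v hv r hr
        simp only
        rw [← hx, ← hy, ← ha, agreeS, agreeI, agreeI, (hseq n).inner_smul_right, map_mul]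
    exact congrFun hfg (x, y, a)
  · -- star_inner
    intro x y
    have hfg : (fun p : Xinf × Xinf => star (IB p.1 p.2)) = fun p => IB p.2 p.1 := by
      refine Continuous.ext_on (denseX.prod denseX) ?_ ?_ ?_
      · exact continuous_star.comp contI
      · exact contI.comp (continuous_snd.prodMk continuous_fst)
      · rintro ⟨u, v⟩ ⟨hu, hv⟩
        obtain ⟨n, x', y', hx, hy⟩ := rep2 u hu v hv
        simp only
        rw [← hx, ← hy, agreeI, agreeI, ← map_star, (hseq n).star_inner]
    exact congrFun hfg (x, y)
  · -- inner_self_nonneg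
    intro u
    have hclosed : IsClosed {w : Xinf | ∃ b : Ainf, IB w w = star b * b} := by
      have h1 : IsClosed {z : Ainf | ∃ b : Ainf, z = star b * b} := isClosed_star_mul_self Ainf
      have h2 : Continuous fun w : Xinf => IB w w :=
        contI.comp (continuous_id.prodMk continuous_id)
      exact h1.preimage h2
    have hsub : (⋃ n, Set.range (lamX n)) ⊆ {w : Xinf | ∃ b : Ainf, IB w w = star b * b} := by
      intro w hw
      obtain ⟨n, x, rfl⟩ := rep1 w hw
      obtain ⟨b, hb⟩ := (hseq n).inner_self_nonneg x
      refine ⟨lamA n b, ?_⟩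
      rw [agreeI, hb, map_mul, map_star]
    have huniv : (Set.univ : Set Xinf) ⊆ {w : Xinf | ∃ b : Ainf, IB w w = star b * b} := by
      rw [← hlamXdense]
      exact closure_minimal hsub hclosed
    exact huniv (Set.mem_univ u)
  · -- inner_self_eq_zero
    intro u hu
    have h1 : ‖u‖ = 0 := by rw [hnorm u, hu, norm_zero, Real.sqrt_zero]
    exact norm_eq_zero.mp h1
  · -- uniqueness
    rintro h' ⟨hc1, hc2, hsm', hin'⟩
    refine RHM.ext' ?_ ?_
    · have hfg : (fun p : Xinf × Ainf => h'.smul p.1 p.2) = fun p => SB p.1 p.2 := by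
        refine Continuous.ext_on (denseX.prod denseA) hc1 contS ?_
        rintro ⟨u, r⟩ ⟨hu, hr⟩
        obtain ⟨n, x, a, hx, ha⟩ := rep2XA u hu r hr
        simp only
        rw [← hx, ← ha, hsm' n x a, agreeS]
      exact funext fun u => funext fun a => congrFun hfg (u, a)
    · have hfg : (fun p : Xinf × Xinf => h'.inner p.1 p.2) = fun p => IB p.1 p.2 := by
        refine Continuous.ext_on (denseX.prod denseX) hc2 contI ?_
        rintro ⟨u, v⟩ ⟨hu, hv⟩
        obtain ⟨n, x, y, hx, hy⟩ := rep2 u hu v hv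
        simp only
        rw [← hx, ← hy, hin' n x y, agreeI]
      exact funext fun u => funext fun v => congrFun hfg (u, v)
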